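/- Let α ∈ [0,1] and set g = √((1−α)² + 4α²) and λ = 1/2 + α/g. In ℂ², let |0⟩, |1⟩ be the standard basis, |+⟩ = (|0⟩+|1⟩)/√2, |−⟩ = (|0⟩−|1⟩)/√2, and define the unit vectors ψ₀₀ = (|0⟩+|+⟩)/√(2+√2), ψ₀₁ = (|0⟩+|−⟩)/√(2+√2), ψ₁₀ = (|1⟩+|+⟩)/√(2+√2), ψ₁₁ = (|1⟩−|−⟩)/√(2+√2), and states ρ_x = |ψ_x⟩⟨ψ_x|. Define Kraus operators K⁰₀ = √λ|0⟩⟨0| + √(1−λ)|1⟩⟨1|, K⁰₁ = √(1−λ)|0⟩⟨0| + √λ|1⟩⟨1|, K¹₀ = √λ|+⟩⟨+| + √(1−λ)|−⟩⟨−|, K¹₁ = √(1−λ)|+⟩⟨+| + √λ|−⟩⟨−|, and Charlie's measurement effects C⁰₀ = |0⟩⟨0|, C⁰₁ = |1⟩⟨1|, C¹₀ = |+⟩⟨+|, C¹₁ = |−⟩⟨−|. Then (α/8)·Σ_{x,y} tr(K^y_{x_y} ρ_x (K^y_{x_y})†) + ((1−α)/16)·Σ_{x,y,z,b} tr(K^y_b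 ρ_x (K^y_b)† C^z_{x_z}) = 1/2 + (1−α)/(4√2) + √((1−α)² + 4α²)/(4√2). (This is the achievability part of Proposition 2: the explicit unsharp-measurement strategy attains the value P̄_succ^POVM(α).) -/

import Mathlib

open Matrix

noncomputable section

abbrev Mat2 := Matrix (Fin 2) (Fin 2) ℂ

/-- The `y`-th bit of the pair `(x₀, x₁)`. -/
def sel (x₀ x₁ y : Fin 2) : Fin 2 := if y = 0 then x₀ else x₁

/-- The rank-one projection (outer product) `|v⟩⟨v|`. -/
def proj (v : Fin 2 → ℂ) : Mat2 := vecMulVec v (star v)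

def ket0 : Fin 2 → ℂ := ![1, 0]
def ket1 : Fin 2 → ℂ := ![0, 1]
def ketP : Fin 2 → ℂ := ![1 / (Real.sqrt 2 : ℂ), 1 / (Real.sqrt 2 : ℂ)]
def ketM : Fin 2 → ℂ := ![1 / (Real.sqrt 2 : ℂ), -(1 / (Real.sqrt 2 : ℂ))]

/-- The orthonormal basis used by Bob's instrument `y` and Charlie's measurement `z`:
the computational basis for `y = 0` and the `±` basis for `y = 1`. -/
def bas (y j : Fin 2) : Fin 2 → ℂ :=
  if y = 0 then (if j = 0 then ket0 else ket1) else (if j = 0 then ketP else ketM)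

/-- Alice's states: `ψ₀₀ = (|0⟩+|+⟩)/√(2+√2)`, `ψ₀₁ = (|0⟩+|−⟩)/√(2+√2)`,
`ψ₁₀ = (|1⟩+|+⟩)/√(2+√2)`, `ψ₁₁ = (|1⟩−|−⟩)/√(2+√2)`. -/
def psi (x₀ x₁ : Fin 2) : Fin 2 → ℂ := fun i =>
  ((if x₀ = 0 then ket0 i else ket1 i) +
      (if x₀ = 1 ∧ x₁ = 1 then -1 else 1) * (if x₁ = 0 then ketP i else ketM i)) /
    (Real.sqrt (2 + Real.sqrt 2) : ℂ)

/-- The optimal sharpness `λ(α) = 1/2 + α/√((1−α)² + 4α²)`. -/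
def lam (α : ℝ) : ℝ := 1 / 2 + α / Real.sqrt ((1 - α) ^ 2 + 4 * α ^ 2)

/-- Bob's Kraus operators: `K^y_0 = √λ |bas y 0⟩⟨bas y 0| + √(1−λ) |bas y 1⟩⟨bas y 1|`
and `K^y_1` with `λ` and `1−λ` interchanged. -/
def K (α : ℝ) (y b : Fin 2) : Mat2 :=
  (Real.sqrt (if b = 0 then lam α else 1 - lam α) : ℂ) • proj (bas y 0) +
    (Real.sqrt (if b = 0 then 1 - lam α else lam α) : ℂ) • proj (bas y 1)

/-- Charlie's measurement effects: `C⁰₀ = |0⟩⟨0|`, `C⁰₁ = |1⟩⟨1|`, `C¹₀ = |+⟩⟨+|`,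
`C¹₁ = |−⟩⟨−|`. -/
def Cm (z c : Fin 2) : Mat2 := proj (bas z c)


/-!
Bob's instrument for input `y` is diagonal in the basis `bas y`, so summing its two branches
dephases `ρ` in that basis with visibility `2√(λ(1-λ))`: the total map is
`ρ ↦ 2√(λ(1-λ)) ρ + (√λ - √(1-λ))² (P₀ρP₀ + P₁ρP₁)`.
Every state `ψₓ` makes the angle `π/8` with the vector of `bas y` labelled by the bit `x_y`, so all
overlaps are `cos²(π/8) = (2+√2)/4` or `sin²(π/8) = (2-√2)/4`. Hence Bob guesses right with
probability `λ cos² + (1-λ) sin²`, Charlie measuring in Bob's basis always sees `cos²`, and Charlie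
measuring in the other basis succeeds with probability `1/2 + √(λ(1-λ))/√2`. Averaging with the
weights `α/8` and `(1-α)/16` and inserting `λ = 1/2 + α/g` and `√(λ(1-λ)) = (1-α)/(2g)`, where
`g = √((1-α)²+4α²)`, gives the value.
-/

section Luders

variable {R A : Type*} [CommRing R] [Ring A] [Algebra R A]

theorem luders_channel_eq {P Q : A} (hPQ : P + Q = 1) (s t : R) (ρ : A) :
    (s • P + t • Q) * ρ * (s • P + t • Q) + (t • P + s • Q) * ρ * (t • P + s • Q) =
      (2 * s * t) • ρ + (s - t) ^ 2 • (P * ρ * P + Q * ρ * Q) := by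
  obtain rfl : Q = 1 - P := eq_sub_of_add_eq' hPQ
  simp only [sub_mul, mul_sub, add_mul, mul_add, smul_mul_assoc, mul_smul_comm, one_mul, mul_one,
    smul_sub]
  module

variable {n : Type*} [Fintype n] [DecidableEq n]

theorem trace_smul_add_smul_conj {P Q : Matrix n n R} (hP : P * P = P) (hPQ : P + Q = 1)
    (s t : R) (ρ : Matrix n n R) :
    ((s • P + t • Q) * ρ * (s • P + t • Q)).trace =
      s ^ 2 * (ρ * P).trace + t ^ 2 * (ρ * Q).trace := by
  obtain rfl : Q = 1 - P := eq_sub_of_add_eq' hPQ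
  have hPρP : (P * ρ * P).trace = (ρ * P).trace := by
    rw [trace_mul_cycle, hP, trace_mul_comm]
  simp only [sub_mul, mul_sub, add_mul, mul_add, smul_mul_assoc, mul_smul_comm, one_mul, mul_one,
    smul_sub, trace_add, trace_sub, trace_smul, hPρP, smul_eq_mul]
  rw [trace_mul_comm P ρ]
  ring

end Luders

theorem vecMulVec_mul_mul_vecMulVec {R n : Type*} [CommSemiring R] [Fintype n] (a u : n → R)
    (M : Matrix n n R) :
    vecMulVec a u * M * vecMulVec a u = (M * vecMulVec a u).trace • vecMulVec a u := by
  rw [mul_assoc, mul_vecMulVec, vecMulVec_mul_vecMulVec, trace_vecMulVec, vecMulVec_smul,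
    dotProduct_comm]

theorem proj_mul_mul_proj (u : Fin 2 → ℂ) (M : Mat2) :
    proj u * M * proj u = (M * proj u).trace • proj u :=
  vecMulVec_mul_mul_vecMulVec _ _ _

theorem trace_proj_mul_proj (u v : Fin 2 → ℂ) :
    (proj u * proj v).trace = (star u ⬝ᵥ v) * (star v ⬝ᵥ u) := by
  rw [proj, proj, vecMulVec_mul_vecMulVec, vecMulVec_smul, trace_smul, trace_vecMulVec,
    smul_eq_mul, dotProduct_comm u]

theorem proj_conjTranspose (v : Fin 2 → ℂ) : (proj v)ᴴ = proj v := by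
  rw [proj, conjTranspose_vecMulVec, star_star]

theorem inv_sqrt_two_mul_self : ((Real.sqrt 2 : ℂ))⁻¹ * (Real.sqrt 2 : ℂ)⁻¹ = 1 / 2 := by
  rw [← mul_inv, ← Complex.ofReal_mul, Real.mul_self_sqrt zero_le_two]
  norm_num

theorem proj_bas_add (y : Fin 2) : proj (bas y 0) + proj (bas y 1) = 1 := by
  ext i j
  rw [Matrix.add_apply, proj, proj, vecMulVec_apply, vecMulVec_apply]
  fin_cases y <;> fin_cases i <;> fin_cases j <;>
    simp [bas, ket0, ket1, ketP, ketM, inv_sqrt_two_mul_self] <;> norm_num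

theorem proj_bas_mul_self (y j : Fin 2) : proj (bas y j) * proj (bas y j) = proj (bas y j) := by
  have hunit : star (bas y j) ⬝ᵥ bas y j = 1 := by
    fin_cases y <;> fin_cases j <;>
      simp [bas, ket0, ket1, ketP, ketM, dotProduct, Fin.sum_univ_two, inv_sqrt_two_mul_self] <;>
      norm_num
  rw [proj, vecMulVec_mul_vecMulVec, hunit, one_smul]

theorem trace_proj_bas_mul_proj_bas (y j z c : Fin 2) :
    (proj (bas y j) * proj (bas z c)).trace =
      if y = z then (if j = c then 1 else 0) else 1 / 2 := by
  rw [trace_proj_mul_proj]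
  fin_cases y <;> fin_cases j <;> fin_cases z <;> fin_cases c <;>
    simp [bas, ket0, ket1, ketP, ketM, dotProduct, Fin.sum_univ_two, inv_sqrt_two_mul_self] <;>
    norm_num

theorem trace_proj_psi_mul_proj_bas (x₀ x₁ y j : Fin 2) :
    (proj (psi x₀ x₁) * proj (bas y j)).trace =
      if j = sel x₀ x₁ y then (2 + (Real.sqrt 2 : ℂ)) / 4 else (2 - (Real.sqrt 2 : ℂ)) / 4 := by
  have h2 : (Real.sqrt 2 : ℂ) ^ 2 = 2 := by norm_cast; simp
  have hN : (Real.sqrt (2 + Real.sqrt 2) : ℂ) ^ 2 = 2 + Real.sqrt 2 := by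
    norm_cast; rw [Real.sq_sqrt (by positivity)]
  have h2ne : (Real.sqrt 2 : ℂ) ≠ 0 := by simp
  have hNne : (Real.sqrt (2 + Real.sqrt 2) : ℂ) ≠ 0 := by norm_cast; positivity
  rw [trace_proj_mul_proj]
  fin_cases x₀ <;> fin_cases x₁ <;> fin_cases y <;> fin_cases j <;>
    simp [psi, sel, bas, ket0, ket1, ketP, ketM, dotProduct, Fin.sum_univ_two] <;>
    grind

theorem one_sub_sq_add_four_mul_sq_pos (α : ℝ) : 0 < (1 - α) ^ 2 + 4 * α ^ 2 := by
  nlinarith [sq_nonneg (5 * α - 1)]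

theorem lam_mem_Icc {α : ℝ} (hα : α ∈ Set.Icc (0 : ℝ) 1) : lam α ∈ Set.Icc (0 : ℝ) 1 := by
  obtain ⟨hα0, -⟩ := hα
  have hg := Real.sqrt_pos.2 (one_sub_sq_add_four_mul_sq_pos α)
  have hαg : 2 * α ≤ Real.sqrt ((1 - α) ^ 2 + 4 * α ^ 2) :=
    Real.le_sqrt_of_sq_le (by nlinarith [sq_nonneg (1 - α)])
  have hratio : α / Real.sqrt ((1 - α) ^ 2 + 4 * α ^ 2) ≤ 1 / 2 := by
    rw [div_le_iff₀ hg]; linarith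
  have := div_nonneg hα0 hg.le
  constructor <;> unfold lam <;> linarith

theorem sqrt_lam_mul_sqrt_one_sub_lam {α : ℝ} (hα : α ∈ Set.Icc (0 : ℝ) 1) :
    Real.sqrt (lam α) * Real.sqrt (1 - lam α) =
      (1 - α) / (2 * Real.sqrt ((1 - α) ^ 2 + 4 * α ^ 2)) := by
  have hprod : lam α * (1 - lam α) =
      ((1 - α) / (2 * Real.sqrt ((1 - α) ^ 2 + 4 * α ^ 2))) ^ 2 := by
    have hq := one_sub_sq_add_four_mul_sq_pos α
    have hg2 := Real.sq_sqrt hq.le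
    have hg := (Real.sqrt_pos.2 hq).ne'
    unfold lam
    set g := Real.sqrt ((1 - α) ^ 2 + 4 * α ^ 2)
    field_simp
    linear_combination hg2
  rw [← Real.sqrt_mul (lam_mem_Icc hα).1, hprod, Real.sqrt_sq (by have := hα.2; positivity)]

theorem ofReal_sqrt_sq {a : ℝ} (ha : 0 ≤ a) : ((Real.sqrt a : ℝ) : ℂ) ^ 2 = a := by
  rw [← Complex.ofReal_pow, Real.sq_sqrt ha]

theorem K_conjTranspose (α : ℝ) (y b : Fin 2) : (K α y b)ᴴ = K α y b := by
  simp only [K, conjTranspose_add, conjTranspose_smul, proj_conjTranspose, Complex.star_def,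
    Complex.conj_ofReal]

theorem trace_K_sel_conj_psi {α : ℝ} (hα : α ∈ Set.Icc (0 : ℝ) 1) (x₀ x₁ y : Fin 2) :
    (K α y (sel x₀ x₁ y) * proj (psi x₀ x₁) * (K α y (sel x₀ x₁ y))ᴴ).trace =
      ((lam α * ((2 + Real.sqrt 2) / 4) + (1 - lam α) * ((2 - Real.sqrt 2) / 4) : ℝ) : ℂ) := by
  obtain ⟨hlam0, hlam1⟩ := lam_mem_Icc hα
  have hs := ofReal_sqrt_sq hlam0
  have ht := ofReal_sqrt_sq (sub_nonneg.2 hlam1)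
  rw [K_conjTranspose, K, trace_smul_add_smul_conj (proj_bas_mul_self y 0) (proj_bas_add y),
    trace_proj_psi_mul_proj_bas, trace_proj_psi_mul_proj_bas]
  generalize sel x₀ x₁ y = b
  fin_cases b
  · simp only [Fin.zero_eta, Fin.isValue, ↓reduceIte, hs, ht]
    push_cast
    ring
  · simp only [Fin.mk_one, Fin.isValue, ↓reduceIte, one_ne_zero, hs, ht]
    push_cast
    ring

theorem sum_trace_K_conj_psi_mul_Cm {α : ℝ} (hα : α ∈ Set.Icc (0 : ℝ) 1) (x₀ x₁ y z : Fin 2) :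
    ∑ b : Fin 2, (K α y b * proj (psi x₀ x₁) * (K α y b)ᴴ * Cm z (sel x₀ x₁ z)).trace =
      ((if y = z then (2 + Real.sqrt 2) / 4
        else 1 / 2 + Real.sqrt 2 / 2 * (Real.sqrt (lam α) * Real.sqrt (1 - lam α)) : ℝ) : ℂ) := by
  obtain ⟨hlam0, hlam1⟩ := lam_mem_Icc hα
  have hsum : ((Real.sqrt (lam α) : ℝ) : ℂ) ^ 2 + ((Real.sqrt (1 - lam α) : ℝ) : ℂ) ^ 2 = 1 := by
    rw [ofReal_sqrt_sq hlam0, ofReal_sqrt_sq (sub_nonneg.2 hlam1)]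
    push_cast
    ring
  rw [Fin.sum_univ_two, ← trace_add, K_conjTranspose, K_conjTranspose, ← add_mul]
  simp only [K, if_true, one_ne_zero, if_false]
  rw [luders_channel_eq (proj_bas_add y)]
  simp only [add_mul, smul_mul_assoc, trace_add, trace_smul, Cm, proj_mul_mul_proj,
    trace_proj_psi_mul_proj_bas, trace_proj_bas_mul_proj_bas, smul_eq_mul]
  by_cases hyz : y = z
  · subst hyz
    generalize sel x₀ x₁ y = b
    fin_cases b <;> simp only [Fin.zero_eta, Fin.mk_one, Fin.isValue, ↓reduceIte, zero_ne_one,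
      one_ne_zero] <;> push_cast <;> linear_combination (2 + (Real.sqrt 2 : ℂ)) / 4 * hsum
  · generalize sel x₀ x₁ y = b
    fin_cases b <;> simp only [Fin.zero_eta, Fin.mk_one, Fin.isValue, ↓reduceIte, zero_ne_one,
      one_ne_zero, hyz] <;> push_cast <;> linear_combination (1 / 2 : ℂ) * hsum

theorem povm_strategy_achieves_optimum (α : ℝ) (hα : α ∈ Set.Icc (0 : ℝ) 1) :
    α / 8 * ∑ x₀ : Fin 2, ∑ x₁ : Fin 2, ∑ y : Fin 2,
        ((K α y (sel x₀ x₁ y) * proj (psi x₀ x₁) * (K α y (sel x₀ x₁ y))ᴴ).trace).re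
    + (1 - α) / 16 * ∑ x₀ : Fin 2, ∑ x₁ : Fin 2, ∑ y : Fin 2, ∑ z : Fin 2, ∑ b : Fin 2,
        ((K α y b * proj (psi x₀ x₁) * (K α y b)ᴴ * Cm z (sel x₀ x₁ z)).trace).re
    = 1 / 2 + (1 - α) / (4 * Real.sqrt 2)
        + Real.sqrt ((1 - α) ^ 2 + 4 * α ^ 2) / (4 * Real.sqrt 2) := by
  simp only [trace_K_sel_conj_psi hα, ← Complex.re_sum, sum_trace_K_conj_psi_mul_Cm hα,
    Complex.ofReal_re, sqrt_lam_mul_sqrt_one_sub_lam hα, Fin.sum_univ_two,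
    zero_ne_one, one_ne_zero, if_true, if_false]
  have hq := one_sub_sq_add_four_mul_sq_pos α
  have hg2 := Real.sq_sqrt hq.le
  have hg := (Real.sqrt_pos.2 hq).ne'
  have h2 : Real.sqrt 2 ^ 2 = 2 := Real.sq_sqrt zero_le_two
  unfold lam
  set g := Real.sqrt ((1 - α) ^ 2 + 4 * α ^ 2)
  field_simp
  linear_combination (1024 * α ^ 2 + 256 * g * (1 - α) + 256 * (1 - α) ^ 2) * h2 - 512 * hg2
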